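/- Let Q be a based groupoid quantale over a frame A, and let X be a stably supported Q-module. Then ς_X satisfies the Frobenius condition with respect to the map a ↦ a▹1_X: for all x ∈ X and a ∈ A one has ς_X(x ∧ (a▹1_X)) = a ∧ ς_X(x); moreover ς_X(a▹1_X) = a for all a ∈ A. Consequently ς_X is the direct image of an open surjection of locales X → A. -/

import Mathlib

/-- A based groupoid quantale over a frame `A`: a frame `Q` (with top `1_Q`)
equipped with a sup-preserving associative multiplication, an involution,
unital left/right `A`-actions and an equivariant support `ς_Q : Q → A`. -/
structure BasedGroupoidQuantale (A : Type*) (Q : Type*)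
    [Order.Frame A] [Order.Frame Q] where
  mul : Q → Q → Q
  star : Q → Q
  lres : A → Q → Q          -- `a ▹ q`
  rres : Q → A → Q          -- `q ◃ a`
  suppQ : Q → A             -- `ς_Q`
  mul_assoc : ∀ p q r, mul (mul p q) r = mul p (mul q r)
  mul_sSup_left : ∀ (S : Set Q) (q : Q), mul (sSup S) q = ⨆ p ∈ S, mul p q
  mul_sSup_right : ∀ (p : Q) (S : Set Q), mul p (sSup S) = ⨆ q ∈ S, mul p q
  star_star : ∀ q, star (star q) = q
  star_mul : ∀ p q, star (mul p q) = mul (star q) (star p)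
  star_sSup : ∀ (S : Set Q), star (sSup S) = ⨆ q ∈ S, star q
  lres_top_act : ∀ q, lres ⊤ q = q
  rres_top_act : ∀ q, rres q ⊤ = q
  lres_sSup_left : ∀ (S : Set A) (q : Q), lres (sSup S) q = ⨆ a ∈ S, lres a q
  lres_sSup_right : ∀ (a : A) (S : Set Q), lres a (sSup S) = ⨆ q ∈ S, lres a q
  rres_sSup_left : ∀ (S : Set Q) (a : A), rres (sSup S) a = ⨆ q ∈ S, rres q a
  rres_sSup_right : ∀ (q : Q) (S : Set A), rres q (sSup S) = ⨆ a ∈ S, rres q a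
  lres_lres : ∀ a b q, lres a (lres b q) = lres (a ⊓ b) q
  lres_rres_comm : ∀ a q b, rres (lres a q) b = lres a (rres q b)
  lres_mul : ∀ a p q, mul (lres a p) q = lres a (mul p q)
  rres_mul : ∀ p a q, mul (rres p a) q = mul p (lres a q)
  mul_rres : ∀ p q a, rres (mul p q) a = mul p (rres q a)
  star_lres_rres : ∀ a q b, star (lres a (rres q b)) = lres b (rres (star q) a)
  lres_inf : ∀ a q m, lres a q ⊓ m = lres a (q ⊓ m)
  inf_rres : ∀ m q a, m ⊓ rres q a = rres (q ⊓ m) a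
  suppQ_sSup : ∀ (S : Set Q), suppQ (sSup S) = ⨆ q ∈ S, suppQ q
  suppQ_top : suppQ ⊤ = ⊤
  suppQ_le_mul : ∀ q p, lres (suppQ q) p ≤ mul (mul q (star q)) p
  suppQ_lres : ∀ q, lres (suppQ q) q = q
  suppQ_equivariant : ∀ a q, suppQ (lres a q) = a ⊓ suppQ q

/-- A pre-Hilbert `Q`-module: a frame `X` (with top `1_X`) with a sup-preserving
`Q`-action and a unital left `A`-action, equipped with an inner product. -/
structure PreHilbertModule {A Q : Type*} [Order.Frame A] [Order.Frame Q]
    (GQ : BasedGroupoidQuantale A Q) (X : Type*) [Order.Frame X] where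
  smul : Q → X → X          -- `q · x`
  lres : A → X → X          -- `a ▹ x`
  inner : X → X → Q         -- `⟨x, y⟩`
  smul_sSup_left : ∀ (S : Set Q) (x : X), smul (sSup S) x = ⨆ q ∈ S, smul q x
  smul_sSup_right : ∀ (q : Q) (S : Set X), smul q (sSup S) = ⨆ x ∈ S, smul q x
  mul_smul : ∀ p q x, smul (GQ.mul p q) x = smul p (smul q x)
  lres_top_act : ∀ x, lres ⊤ x = x
  lres_sSup_left : ∀ (S : Set A) (x : X), lres (sSup S) x = ⨆ a ∈ S, lres a x
  lres_sSup_right : ∀ (a : A) (S : Set X), lres a (sSup S) = ⨆ x ∈ S, lres a x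
  lres_lres : ∀ a b x, lres a (lres b x) = lres (a ⊓ b) x
  lresQ_smul : ∀ a q x, smul (GQ.lres a q) x = lres a (smul q x)
  rresQ_smul : ∀ q a x, smul (GQ.rres q a) x = smul q (lres a x)
  lres_inf : ∀ a (x y : X), lres a (x ⊓ y) = lres a x ⊓ y
  inner_smul : ∀ q x y, inner (smul q x) y = GQ.mul q (inner x y)
  lres_inner : ∀ a x, GQ.lres a (inner x ⊤) = inner (lres a x) ⊤
  inner_sSup : ∀ (S : Set X) (y : X), inner (sSup S) y = ⨆ x ∈ S, inner x y
  inner_star : ∀ x y, inner x y = GQ.star (inner y x)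

/-!
The support is recovered from the inner product: `ς_X(x) = ς_Q⟨x, 1_X⟩`. Indeed
`x = ς_X(x) ▹ x ≤ ς_X(x) ▹ 1_X ≤ ⟨x, x⟩ · 1_X ≤ ⟨x, 1_X⟩ · 1_X`, so stability gives `≤`,
while `⟨x, 1_X⟩ = ς_X(x) ▹ ⟨x, 1_X⟩` and equivariance of `ς_Q` give `≥`. Since
`x ∧ (a ▹ 1_X) = a ▹ x` and `⟨a ▹ x, 1_X⟩ = a ▹ ⟨x, 1_X⟩`, the Frobenius condition is then
the equivariance of `ς_Q`.
-/

theorem monotone_of_map_sSup {α β : Type*} [CompleteLattice α] [CompleteLattice β]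
    {f : α → β} (h : ∀ S : Set α, f (sSup S) = ⨆ a ∈ S, f a) : Monotone f := by
  intro p q hpq
  have hpair := h {p, q}
  rw [sSup_pair, sup_eq_right.mpr hpq, iSup_pair] at hpair
  exact hpair ▸ le_sup_left

theorem BasedGroupoidQuantale.star_monotone {A Q : Type*} [Order.Frame A] [Order.Frame Q]
    (GQ : BasedGroupoidQuantale A Q) : Monotone GQ.star :=
  monotone_of_map_sSup GQ.star_sSup

namespace PreHilbertModule

variable {A Q X : Type*} [Order.Frame A] [Order.Frame Q] [Order.Frame X]
  {GQ : BasedGroupoidQuantale A Q} (M : PreHilbertModule GQ X)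

theorem smul_mono_left (x : X) : Monotone fun q => M.smul q x :=
  monotone_of_map_sSup (M.smul_sSup_left · x)

theorem inner_mono_left (y : X) : Monotone fun x => M.inner x y :=
  monotone_of_map_sSup (M.inner_sSup · y)

theorem inner_mono_right (x : X) : Monotone fun y => M.inner x y := fun y z hyz => by
  simp only [M.inner_star x]
  exact GQ.star_monotone (M.inner_mono_left x hyz)

theorem lres_eq_inf_lres_top (a : A) (x : X) : M.lres a x = x ⊓ M.lres a ⊤ := by
  rw [inf_comm, ← M.lres_inf, top_inf_eq]

theorem suppQ_inner_top_lres (a : A) (x : X) :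
    GQ.suppQ (M.inner (M.lres a x) ⊤) = a ⊓ GQ.suppQ (M.inner x ⊤) := by
  rw [← M.lres_inner, GQ.suppQ_equivariant]

section Supported

variable {M} {ς : X → A}

theorem le_smul_inner_top (hς_le : ∀ x, M.lres (ς x) ⊤ ≤ M.smul (M.inner x x) ⊤)
    (hς_restrict : ∀ x, M.lres (ς x) x = x) (x : X) : x ≤ M.smul (M.inner x ⊤) ⊤ :=
  calc x = x ⊓ M.lres (ς x) ⊤ := by rw [← M.lres_eq_inf_lres_top, hς_restrict]
    _ ≤ M.smul (M.inner x x) ⊤ := inf_le_right.trans (hς_le x)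
    _ ≤ M.smul (M.inner x ⊤) ⊤ := M.smul_mono_left ⊤ (M.inner_mono_right x le_top)

theorem suppQ_inner_top_le (hς_restrict : ∀ x, M.lres (ς x) x = x) (x : X) :
    GQ.suppQ (M.inner x ⊤) ≤ ς x := by
  have hfix := M.suppQ_inner_top_lres (ς x) x
  rw [hς_restrict] at hfix
  exact hfix.trans_le inf_le_left

theorem supp_eq_suppQ_inner_top (hmono : Monotone ς)
    (hς_le : ∀ x, M.lres (ς x) ⊤ ≤ M.smul (M.inner x x) ⊤)
    (hς_restrict : ∀ x, M.lres (ς x) x = x)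
    (hς_stable : ∀ (q : Q) (x : X), ς (M.smul q x) ≤ GQ.suppQ q) (x : X) :
    ς x = GQ.suppQ (M.inner x ⊤) :=
  le_antisymm ((hmono (le_smul_inner_top hς_le hς_restrict x)).trans (hς_stable _ _))
    (suppQ_inner_top_le hς_restrict x)

theorem supp_inf_lres_top (hς : ∀ x, ς x = GQ.suppQ (M.inner x ⊤)) (x : X) (a : A) :
    ς (x ⊓ M.lres a ⊤) = a ⊓ ς x := by
  rw [← M.lres_eq_inf_lres_top, hς, hς, M.suppQ_inner_top_lres]

theorem supp_lres_top (hς : ∀ x, ς x = GQ.suppQ (M.inner x ⊤)) (hς_top : ς ⊤ = ⊤) (a : A) :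
    ς (M.lres a ⊤) = a := by
  simpa only [top_inf_eq, hς_top, inf_top_eq] using supp_inf_lres_top hς ⊤ a

end Supported

end PreHilbertModule

theorem stably_supported_supp_frobenius_general {A Q X : Type*}
    [Order.Frame A] [Order.Frame Q] [Order.Frame X]
    (GQ : BasedGroupoidQuantale A Q) (M : PreHilbertModule GQ X)
    (ς : X → A) (hmono : Monotone ς) (hς_top : ς ⊤ = ⊤)
    (hς_le : ∀ x, M.lres (ς x) ⊤ ≤ M.smul (M.inner x x) ⊤)
    (hς_restrict : ∀ x, M.lres (ς x) x = x)
    (hς_stable : ∀ (q : Q) (x : X), ς (M.smul q x) ≤ GQ.suppQ q) :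
    (∀ (x : X) (a : A), ς (x ⊓ M.lres a ⊤) = a ⊓ ς x) ∧
      (∀ a : A, ς (M.lres a ⊤) = a) := by
  have hς := PreHilbertModule.supp_eq_suppQ_inner_top hmono hς_le hς_restrict hς_stable
  exact ⟨PreHilbertModule.supp_inf_lres_top hς, PreHilbertModule.supp_lres_top hς hς_top⟩

/-- From the proof of Theorem 5.1: for a stably supported `Q`-module `X`, the
support `ς_X` satisfies the Frobenius condition with respect to `a ↦ a▹1_X`,
namely `ς_X(x ∧ (a▹1_X)) = a ∧ ς_X(x)`, and `ς_X(a▹1_X) = a`; hence `ς_X` is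
the direct image of an open surjection of locales `X → A`. -/
theorem stably_supported_supp_frobenius {A Q X : Type*}
    [Order.Frame A] [Order.Frame Q] [Order.Frame X]
    (GQ : BasedGroupoidQuantale A Q) (M : PreHilbertModule GQ X)
    (hQ_stable : ∀ p q : Q, GQ.suppQ (GQ.mul p q) ≤ GQ.suppQ p)
    (ς : X → A) (hmono : Monotone ς) (hς_top : ς ⊤ = ⊤)
    (hς_le : ∀ x, M.lres (ς x) ⊤ ≤ M.smul (M.inner x x) ⊤)
    (hς_restrict : ∀ x, M.lres (ς x) x = x)
    (hς_stable : ∀ (q : Q) (x : X), ς (M.smul q x) ≤ GQ.suppQ q) :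
    (∀ (x : X) (a : A), ς (x ⊓ M.lres a ⊤) = a ⊓ ς x) ∧
      (∀ a : A, ς (M.lres a ⊤) = a) :=
  stably_supported_supp_frobenius_general GQ M ς hmono hς_top hς_le hς_restrict hς_stable
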